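/- There exists an uncountable subset E of the full shift Σ_2 = {0,1}^ℕ such that for any two distinct points s = (s_n), t = (t_n) in E, we have s_n = t_n for infinitely many n and s_m ≠ t_m for infinitely many m. -/

import Mathlib

/-!
Spread a sequence `a` over the rows of the Cantor pairing `ℕ ≃ ℕ × ℕ`: row `0` is constant and
row `k + 1` repeats `a k`. Two spread sequences agree on all of row `0`, which is infinite, and if
`a k ≠ b k` they differ on all of row `k + 1`. Spreading is injective, so the spread sequences form
an uncountable set by Cantor's diagonal argument.
-/

theorem uncountable_nat_arrow (α : Type*) [Nontrivial α] : Uncountable (ℕ → α) := by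
  refine uncountable_iff_forall_not_surjective.mpr fun g hg => ?_
  choose d hd using fun n => exists_ne (g n n)
  obtain ⟨n, hn⟩ := hg d
  exact hd n (congrFun hn n).symm

theorem Nat.infinite_setOf_unpair_fst_eq (i : ℕ) : {n : ℕ | n.unpair.1 = i}.Infinite :=
  Set.infinite_of_injective_forall_mem (f := Nat.pair i)
    (fun _ _ h => (Nat.pair_eq_pair.mp h).2) fun j => by simp

section Spread

variable {α : Type*}

def spread (c : α) (a : ℕ → α) (n : ℕ) : α :=
  match n.unpair.1 with
  | 0 => c
  | k + 1 => a k

theorem spread_of_unpair_fst_eq_zero (c : α) (a : ℕ → α) {n : ℕ} (hn : n.unpair.1 = 0) :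
    spread c a n = c := by
  simp only [spread, hn]

theorem spread_of_unpair_fst_eq_succ (c : α) (a : ℕ → α) {n k : ℕ} (hn : n.unpair.1 = k + 1) :
    spread c a n = a k := by
  simp only [spread, hn]

theorem spread_injective (c : α) : Function.Injective (spread c) := fun a b h =>
  funext fun k => by
    have hk : (Nat.pair (k + 1) 0).unpair.1 = k + 1 := by simp
    simpa only [spread_of_unpair_fst_eq_succ _ _ hk] using congrFun h (Nat.pair (k + 1) 0)

theorem not_countable_range_spread [Nontrivial α] (c : α) : ¬(Set.range (spread c)).Countable := by
  have := uncountable_nat_arrow α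
  exact fun h => Set.not_countable_univ (by simpa using h.preimage (spread_injective c))

theorem infinite_setOf_spread_eq (c : α) (a b : ℕ → α) :
    {n | spread c a n = spread c b n}.Infinite :=
  (Nat.infinite_setOf_unpair_fst_eq 0).mono fun _ hn =>
    (spread_of_unpair_fst_eq_zero c a hn).trans (spread_of_unpair_fst_eq_zero c b hn).symm

theorem infinite_setOf_spread_ne (c : α) {a b : ℕ → α} (hab : a ≠ b) :
    {n | spread c a n ≠ spread c b n}.Infinite := by
  obtain ⟨k, hk⟩ := Function.ne_iff.mp hab
  refine (Nat.infinite_setOf_unpair_fst_eq (k + 1)).mono fun n hn => ?_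
  show spread c a n ≠ spread c b n
  rwa [spread_of_unpair_fst_eq_succ c a hn, spread_of_unpair_fst_eq_succ c b hn]

end Spread

theorem stmt_3 :
    ∃ E : Set (ℕ → Fin 2), ¬E.Countable ∧
      ∀ s ∈ E, ∀ t ∈ E, s ≠ t →
        {n : ℕ | s n = t n}.Infinite ∧ {m : ℕ | s m ≠ t m}.Infinite := by
  refine ⟨Set.range (spread 0), not_countable_range_spread 0, ?_⟩
  rintro _ ⟨a, rfl⟩ _ ⟨b, rfl⟩ hab
  exact ⟨infinite_setOf_spread_eq 0 a b, infinite_setOf_spread_ne 0 (ne_of_apply_ne _ hab)⟩
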